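/- arXiv:2306.13890 — 2 statements merged into one kernel-verified Lean document; each statement's English description precedes it below -/
import Mathlib

section
/- Let v and u be unit vectors in the Euclidean plane ℝ². Then the infimum, over all a ∈ ℝ² with a ≠ 0, of the quantity (⟪a,v⟫² + ⟪a,u⟫²)/‖a‖² equals 1 − |⟪v,u⟫|. -/
/-!
Three vectors `a, v, u` in a plane are linearly dependent, so their Gram determinant vanishes.
For unit `v, u` with `c = ⟪v, u⟫`, `x = ⟪a, v⟫`, `y = ⟪a, u⟫` this reads
`x² + y² - 2cxy = (1 - c²)‖a‖²`. Since `2|cxy| ≤ |c|(x² + y²)`, it follows that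
`x² + y² ≥ (1 - |c|)‖a‖²`, with equality when `x = -s y` for `s = sign c`, i.e. for any
nonzero `a` orthogonal to `v + s u`.
-/

open scoped RealInnerProductSpace

open Module Matrix

theorem Matrix.det_gram_eq_zero_of_finrank_lt_card {𝕜 E n : Type*} [RCLike 𝕜]
    [NormedAddCommGroup E] [InnerProductSpace 𝕜 E] [FiniteDimensional 𝕜 E]
    [Fintype n] [DecidableEq n] (v : n → E) (h : finrank 𝕜 E < Fintype.card n) :
    (gram 𝕜 v).det = 0 := by
  by_contra hdet
  exact h.not_ge (det_gram_ne_zero_iff_linearIndependent.1 hdet).fintype_card_le_finrank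

section Plane

variable {E : Type*} [NormedAddCommGroup E] [InnerProductSpace ℝ E] [FiniteDimensional ℝ E]

theorem exists_ne_zero_inner_eq_zero (hE : 2 ≤ finrank ℝ E) (w : E) :
    ∃ a : E, a ≠ 0 ∧ ⟪a, w⟫ = 0 := by
  have hspan : finrank ℝ (ℝ ∙ w) ≤ 1 := by
    simpa using finrank_span_le_card ({w} : Set E)
  have hperp : (ℝ ∙ w)ᗮ ≠ ⊥ := by
    rw [Ne, ← Submodule.finrank_eq_zero]
    have := (ℝ ∙ w).finrank_add_finrank_orthogonal
    omega
  obtain ⟨a, ha, ha0⟩ := Submodule.exists_mem_ne_zero_of_ne_bot hperp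
  exact ⟨a, ha0, by rwa [real_inner_comm, ← Submodule.mem_orthogonal_singleton_iff_inner_right]⟩

theorem inner_sq_add_inner_sq_sub_eq_of_finrank_le_two (hE : finrank ℝ E ≤ 2) {v u : E}
    (hv : ‖v‖ = 1) (hu : ‖u‖ = 1) (a : E) :
    ⟪a, v⟫ ^ 2 + ⟪a, u⟫ ^ 2 - 2 * ⟪v, u⟫ * (⟪a, v⟫ * ⟪a, u⟫) = (1 - ⟪v, u⟫ ^ 2) * ‖a‖ ^ 2 := by
  have h := det_gram_eq_zero_of_finrank_lt_card (𝕜 := ℝ) ![a, v, u] (by simp; omega)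
  rw [det_fin_three] at h
  simp only [gram_apply, cons_val_zero, cons_val_one, cons_val_two, head_cons, tail_cons,
    real_inner_self_eq_norm_sq, hv, hu, real_inner_comm a, real_inner_comm v u] at h
  linear_combination -h

theorem one_sub_abs_inner_mul_norm_sq_le (hE : finrank ℝ E ≤ 2) {v u : E}
    (hv : ‖v‖ = 1) (hu : ‖u‖ = 1) (a : E) :
    (1 - |⟪v, u⟫|) * ‖a‖ ^ 2 ≤ ⟪a, v⟫ ^ 2 + ⟪a, u⟫ ^ 2 := by
  have hgram := inner_sq_add_inner_sq_sub_eq_of_finrank_le_two hE hv hu a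
  have hcross : -(2 * ⟪v, u⟫ * (⟪a, v⟫ * ⟪a, u⟫)) ≤ |⟪v, u⟫| * (⟪a, v⟫ ^ 2 + ⟪a, u⟫ ^ 2) :=
    calc -(2 * ⟪v, u⟫ * (⟪a, v⟫ * ⟪a, u⟫))
        ≤ |2 * ⟪v, u⟫ * (⟪a, v⟫ * ⟪a, u⟫)| := neg_le_abs _
      _ = |⟪v, u⟫| * (2 * |⟪a, v⟫| * |⟪a, u⟫|) := by
          rw [abs_mul, abs_mul, abs_mul, abs_two]; ring
      _ ≤ |⟪v, u⟫| * (⟪a, v⟫ ^ 2 + ⟪a, u⟫ ^ 2) := by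
          rw [← sq_abs ⟪a, v⟫, ← sq_abs ⟪a, u⟫]
          exact mul_le_mul_of_nonneg_left (two_mul_le_add_sq _ _) (abs_nonneg _)
  have hpos : 0 < 1 + |⟪v, u⟫| := by positivity
  refine le_of_mul_le_mul_left ?_ hpos
  have hsq : (1 + |⟪v, u⟫|) * ((1 - |⟪v, u⟫|) * ‖a‖ ^ 2) = (1 - ⟪v, u⟫ ^ 2) * ‖a‖ ^ 2 := by
    rw [← sq_abs ⟪v, u⟫]; ring
  linarith

theorem exists_ne_zero_inner_sq_add_inner_sq_eq (hE : finrank ℝ E = 2) {v u : E}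
    (hv : ‖v‖ = 1) (hu : ‖u‖ = 1) :
    ∃ a : E, a ≠ 0 ∧ ⟪a, v⟫ ^ 2 + ⟪a, u⟫ ^ 2 = (1 - |⟪v, u⟫|) * ‖a‖ ^ 2 := by
  obtain ⟨s, hs, hsc⟩ : ∃ s : ℝ, s ^ 2 = 1 ∧ s * ⟪v, u⟫ = |⟪v, u⟫| := by
    rcases le_or_gt 0 ⟪v, u⟫ with hc | hc
    · exact ⟨1, by norm_num, by rw [one_mul, abs_of_nonneg hc]⟩
    · exact ⟨-1, by norm_num, by rw [neg_one_mul, abs_of_neg hc]⟩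
  obtain ⟨a, ha, hperp⟩ := exists_ne_zero_inner_eq_zero hE.ge (v + s • u)
  have hav : ⟪a, v⟫ = -s * ⟪a, u⟫ := by
    rw [inner_add_right, inner_smul_right] at hperp
    linarith
  have hgram := inner_sq_add_inner_sq_sub_eq_of_finrank_le_two hE.le hv hu a
  have hpos : 0 < 1 + |⟪v, u⟫| := by positivity
  refine ⟨a, ha, mul_left_cancel₀ hpos.ne' ?_⟩
  rw [hav] at hgram ⊢
  linear_combination hgram + |⟪v, u⟫| * ⟪a, u⟫ ^ 2 * hs - 2 * ⟪a, u⟫ ^ 2 * hsc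
    + ‖a‖ ^ 2 * sq_abs ⟪v, u⟫

end Plane

/-- Transformation-stability identity in the Euclidean plane: for unit vectors `v, u`,
the infimum over `a ≠ 0` of `(⟪a,v⟫² + ⟪a,u⟫²)/‖a‖²` equals `1 − |⟪v,u⟫|`. -/
theorem stmt_3 (v u : EuclideanSpace ℝ (Fin 2)) (hv : ‖v‖ = 1) (hu : ‖u‖ = 1) :
    sInf {r : ℝ | ∃ a : EuclideanSpace ℝ (Fin 2), a ≠ 0 ∧
        r = (⟪a, v⟫ ^ 2 + ⟪a, u⟫ ^ 2) / ‖a‖ ^ 2} = 1 - |⟪v, u⟫| := by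
  have hE : finrank ℝ (EuclideanSpace ℝ (Fin 2)) = 2 := finrank_euclideanSpace_fin
  refine IsLeast.csInf_eq ⟨?_, ?_⟩
  · obtain ⟨a, ha, hattain⟩ := exists_ne_zero_inner_sq_add_inner_sq_eq hE hv hu
    exact ⟨a, ha, by rw [hattain, mul_div_cancel_right₀ _ (by positivity)]⟩
  · rintro r ⟨a, ha, rfl⟩
    exact (le_div_iff₀ (by positivity)).2 (one_sub_abs_inner_mul_norm_sq_le hE.le hv hu a)
end

section
/- Let K ⊆ ℝ² be a measurable set, v : ℝ² → ℝ twice continuously differentiable, and t₁, t₂ unit vectors in ℝ² with |⟪t₁,t₂⟫| < 1. For i = 1,2 define fᵢ(x) := (Dv(x))(tᵢ), the directional derivative of v along tᵢ. Let C_PF > 0 and h > 0, and assume the Poincaré–Friedrichs bounds ∫_K fᵢ(x)² dx ≤ C_PF² h² ∫_K ‖D fᵢ(x)‖² dx for i = 1,2, where Dfᵢ(x) is the (Fréchet) derivative of fᵢ at x. Then ∫_K ‖Dv(x)‖² dx ≤ (2 C_PF² / (1 − |⟪t₁,t₂⟫|)) · h² · ∫_K ‖D²v(x)‖² dx, where D²v(x)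 denotes the second derivative of v at x with its operator norm, and all integrals are Lebesgue integrals over K with values in [0,∞]. -/
open MeasureTheory
open scoped RealInnerProductSpace ENNReal

/-!
For unit vectors `t₁, t₂` with `c = ⟪t₁, t₂⟫`, one has `‖a • t₁ + b • t₂‖² ≥ (1 - |c|)(a² + b²)`.
If `|c| < 1` the two vectors span the plane, so by Cauchy–Schwarz every linear functional satisfies
`(1 - |c|) ‖L‖² ≤ L t₁² + L t₂²`. Applied to `L = Dv(x)` and integrated over `K`, this bounds
`∫ ‖Dv‖²` by the two directional terms; the Poincaré–Friedrichs bounds and `‖D fᵢ‖ ≤ ‖D²v‖`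
finish the proof.
-/

section InnerProductSpace

variable {E : Type*} [NormedAddCommGroup E] [InnerProductSpace ℝ E] {t₁ t₂ : E}

lemma one_sub_abs_inner_mul_le_norm_smul_add_smul_sq (ht₁ : ‖t₁‖ = 1) (ht₂ : ‖t₂‖ = 1)
    (a b : ℝ) : (1 - |⟪t₁, t₂⟫|) * (a ^ 2 + b ^ 2) ≤ ‖a • t₁ + b • t₂‖ ^ 2 := by
  rw [norm_add_sq_real, norm_smul, norm_smul, real_inner_smul_left, real_inner_smul_right,
    ht₁, ht₂, Real.norm_eq_abs, Real.norm_eq_abs]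
  -- `|c| (a² + b²) + 2abc = ½(|c| + c)(a + b)² + ½(|c| - c)(a - b)²`
  nlinarith [mul_nonneg (neg_le_iff_add_nonneg.mp (neg_abs_le ⟪t₁, t₂⟫)) (sq_nonneg (a + b)),
    mul_nonneg (sub_nonneg.mpr (le_abs_self ⟪t₁, t₂⟫)) (sq_nonneg (a - b)), sq_abs a, sq_abs b]

lemma linearIndependent_pair_of_abs_inner_lt_one (ht₁ : ‖t₁‖ = 1) (ht₂ : ‖t₂‖ = 1)
    (ht : |⟪t₁, t₂⟫| < 1) : LinearIndependent ℝ ![t₁, t₂] := by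
  refine LinearIndependent.pair_iff.mpr fun a b hab => ?_
  have h := one_sub_abs_inner_mul_le_norm_smul_add_smul_sq ht₁ ht₂ a b
  rw [hab, norm_zero, zero_pow two_ne_zero] at h
  have hsq : a ^ 2 + b ^ 2 ≤ 0 := nonpos_of_mul_nonpos_right h (sub_pos.mpr ht)
  exact ⟨by nlinarith [sq_nonneg b], by nlinarith [sq_nonneg a]⟩

lemma one_sub_abs_inner_mul_sq_opNorm_le [FiniteDimensional ℝ E] (hE : Module.finrank ℝ E = 2)
    (ht₁ : ‖t₁‖ = 1) (ht₂ : ‖t₂‖ = 1) (ht : |⟪t₁, t₂⟫| < 1) (L : StrongDual ℝ E) :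
    (1 - |⟪t₁, t₂⟫|) * ‖L‖ ^ 2 ≤ L t₁ ^ 2 + L t₂ ^ 2 := by
  have hspan : Submodule.span ℝ {t₁, t₂} = ⊤ := by
    rw [← Matrix.range_cons_cons_empty t₁ t₂ ![]]
    exact (linearIndependent_pair_of_abs_inner_lt_one ht₁ ht₂ ht).span_eq_top_of_card_eq_finrank'
      (by simp [hE])
  have hpos : 0 < 1 - |⟪t₁, t₂⟫| := sub_pos.mpr ht
  set Q := (L t₁ ^ 2 + L t₂ ^ 2) / (1 - |⟪t₁, t₂⟫|)
  suffices ‖L‖ ≤ √Q by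
    have := pow_le_pow_left₀ (norm_nonneg L) this 2
    rw [Real.sq_sqrt (by positivity)] at this
    rwa [le_div_iff₀' hpos] at this
  refine L.opNorm_le_bound (Real.sqrt_nonneg Q) fun x => ?_
  obtain ⟨a, b, rfl⟩ := Submodule.mem_span_pair.mp (hspan ▸ Submodule.mem_top : x ∈ _)
  rw [Real.norm_eq_abs, ← Real.sqrt_sq (norm_nonneg (a • t₁ + b • t₂)), ← Real.sqrt_mul
    (by positivity)]
  refine Real.abs_le_sqrt ?_
  have hx := one_sub_abs_inner_mul_le_norm_smul_add_smul_sq ht₁ ht₂ a b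
  calc L (a • t₁ + b • t₂) ^ 2 = (a * L t₁ + b * L t₂) ^ 2 := by simp
    _ ≤ (a ^ 2 + b ^ 2) * (L t₁ ^ 2 + L t₂ ^ 2) := by nlinarith [sq_nonneg (a * L t₂ - b * L t₁)]
    _ ≤ Q * ‖a • t₁ + b • t₂‖ ^ 2 := by
      rw [div_mul_eq_mul_div, le_div_iff₀ hpos]
      nlinarith [add_nonneg (sq_nonneg (L t₁)) (sq_nonneg (L t₂))]

end InnerProductSpace

section SecondDerivative

variable {𝕜 : Type*} [NontriviallyNormedField 𝕜] {E : Type*} [NormedAddCommGroup E]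
  [NormedSpace 𝕜 E] {F : Type*} [NormedAddCommGroup F] [NormedSpace 𝕜 F]

lemma norm_fderiv_fderiv_apply_le {v : E → F} {x : E} (hv : DifferentiableAt 𝕜 (fderiv 𝕜 v) x)
    (t : E) : ‖fderiv 𝕜 (fun y => fderiv 𝕜 v y t) x‖ ≤ ‖t‖ * ‖iteratedFDeriv 𝕜 2 v x‖ := by
  have hcomp : fderiv 𝕜 (fun y => fderiv 𝕜 v y t) x =
      (ContinuousLinearMap.apply 𝕜 F t).comp (fderiv 𝕜 (fderiv 𝕜 v) x) :=
    ((ContinuousLinearMap.apply 𝕜 F t).hasFDerivAt.comp x hv.hasFDerivAt).fderiv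
  rw [hcomp, ← norm_iteratedFDeriv_fderiv (n := 1), norm_iteratedFDeriv_one]
  refine (ContinuousLinearMap.opNorm_comp_le _ _).trans
    (mul_le_mul_of_nonneg_right ?_ (norm_nonneg _))
  exact ContinuousLinearMap.opNorm_le_bound _ (norm_nonneg t) fun L => by
    rw [mul_comm]; exact L.le_opNorm t

end SecondDerivative

section Integrals

variable {E : Type*} [NormedAddCommGroup E] [InnerProductSpace ℝ E] [FiniteDimensional ℝ E]
  [MeasurableSpace E] [OpensMeasurableSpace E] (μ : Measure E)

lemma lintegral_norm_fderiv_sq_le (hE : Module.finrank ℝ E = 2) {t₁ t₂ : E} (ht₁ : ‖t₁‖ = 1)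
    (ht₂ : ‖t₂‖ = 1) (ht : |⟪t₁, t₂⟫| < 1) (v : E → ℝ) :
    ∫⁻ x, ENNReal.ofReal (‖fderiv ℝ v x‖ ^ 2) ∂μ ≤
      ENNReal.ofReal (1 - |⟪t₁, t₂⟫|)⁻¹ *
        (∫⁻ x, ENNReal.ofReal (fderiv ℝ v x t₁ ^ 2) ∂μ +
          ∫⁻ x, ENNReal.ofReal (fderiv ℝ v x t₂ ^ 2) ∂μ) := by
  have hinv : 0 ≤ (1 - |⟪t₁, t₂⟫|)⁻¹ := inv_nonneg.mpr (sub_pos.mpr ht).le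
  rw [← lintegral_add_left ((measurable_fderiv_apply_const ℝ v t₁).pow_const 2).ennreal_ofReal,
    ← lintegral_const_mul' _ _ ENNReal.ofReal_ne_top]
  refine lintegral_mono fun x => ?_
  rw [← ENNReal.ofReal_add (sq_nonneg _) (sq_nonneg _), ← ENNReal.ofReal_mul hinv]
  refine ENNReal.ofReal_le_ofReal ?_
  rw [← div_eq_inv_mul, le_div_iff₀' (sub_pos.mpr ht)]
  exact one_sub_abs_inner_mul_sq_opNorm_le hE ht₁ ht₂ ht (fderiv ℝ v x)

end Integrals

lemma lintegral_norm_fderiv_fderiv_apply_sq_le {E : Type*} [NormedAddCommGroup E]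
    [NormedSpace ℝ E] [MeasurableSpace E] (μ : Measure E) {v : E → ℝ} (hv : ContDiff ℝ 2 v)
    {t : E} (ht : ‖t‖ = 1) :
    ∫⁻ x, ENNReal.ofReal (‖fderiv ℝ (fun y => fderiv ℝ v y t) x‖ ^ 2) ∂μ ≤
      ∫⁻ x, ENNReal.ofReal (‖iteratedFDeriv ℝ 2 v x‖ ^ 2) ∂μ := by
  have hv' : Differentiable ℝ (fderiv ℝ v) :=
    (hv.fderiv_right (m := 1) le_rfl).differentiable one_ne_zero
  refine lintegral_mono fun x => ENNReal.ofReal_le_ofReal ?_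
  have := norm_fderiv_fderiv_apply_le (hv' x) t
  rw [ht, one_mul] at this
  gcongr

theorem stmt_6_general (K : Set (EuclideanSpace ℝ (Fin 2)))
    (v : EuclideanSpace ℝ (Fin 2) → ℝ) (hv : ContDiff ℝ 2 v)
    (t₁ t₂ : EuclideanSpace ℝ (Fin 2)) (ht₁ : ‖t₁‖ = 1) (ht₂ : ‖t₂‖ = 1)
    (ht : |⟪t₁, t₂⟫| < 1)
    (C_PF h : ℝ)
    (hPF₁ : ∫⁻ x in K, ENNReal.ofReal ((fderiv ℝ v x t₁) ^ 2) ≤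
      ENNReal.ofReal (C_PF ^ 2 * h ^ 2) *
        ∫⁻ x in K, ENNReal.ofReal (‖fderiv ℝ (fun y => fderiv ℝ v y t₁) x‖ ^ 2))
    (hPF₂ : ∫⁻ x in K, ENNReal.ofReal ((fderiv ℝ v x t₂) ^ 2) ≤
      ENNReal.ofReal (C_PF ^ 2 * h ^ 2) *
        ∫⁻ x in K, ENNReal.ofReal (‖fderiv ℝ (fun y => fderiv ℝ v y t₂) x‖ ^ 2)) :
    ∫⁻ x in K, ENNReal.ofReal (‖fderiv ℝ v x‖ ^ 2) ≤
      ENNReal.ofReal (2 * C_PF ^ 2 / (1 - |⟪t₁, t₂⟫|) * h ^ 2) *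
        ∫⁻ x in K, ENNReal.ofReal (‖iteratedFDeriv ℝ 2 v x‖ ^ 2) := by
  set I₂ := ∫⁻ x in K, ENNReal.ofReal (‖iteratedFDeriv ℝ 2 v x‖ ^ 2)
  have hinv : 0 ≤ (1 - |⟪t₁, t₂⟫|)⁻¹ := inv_nonneg.mpr (sub_pos.mpr ht).le
  calc ∫⁻ x in K, ENNReal.ofReal (‖fderiv ℝ v x‖ ^ 2)
      ≤ ENNReal.ofReal (1 - |⟪t₁, t₂⟫|)⁻¹ *
          ((∫⁻ x in K, ENNReal.ofReal (fderiv ℝ v x t₁ ^ 2)) +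
            ∫⁻ x in K, ENNReal.ofReal (fderiv ℝ v x t₂ ^ 2)) :=
        lintegral_norm_fderiv_sq_le _ finrank_euclideanSpace_fin ht₁ ht₂ ht v
    _ ≤ ENNReal.ofReal (1 - |⟪t₁, t₂⟫|)⁻¹ *
          (ENNReal.ofReal (C_PF ^ 2 * h ^ 2) * I₂ + ENNReal.ofReal (C_PF ^ 2 * h ^ 2) * I₂) :=
        mul_le_mul_right (add_le_add
          (hPF₁.trans (mul_le_mul_right (lintegral_norm_fderiv_fderiv_apply_sq_le _ hv ht₁) _))
          (hPF₂.trans (mul_le_mul_right (lintegral_norm_fderiv_fderiv_apply_sq_le _ hv ht₂) _))) _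
    _ = ENNReal.ofReal (2 * C_PF ^ 2 / (1 - |⟪t₁, t₂⟫|) * h ^ 2) * I₂ := by
        rw [← add_mul, ← mul_assoc, ← ENNReal.ofReal_add (by positivity) (by positivity),
          ← ENNReal.ofReal_mul hinv]
        congr 2
        ring

/-- Quantitative core of the Poincaré-type inequality (Lemma 6.3): if the directional
derivatives `fᵢ = Dv(·)(tᵢ)` along two unit directions `t₁, t₂` with `|⟪t₁,t₂⟫| < 1`
satisfy Poincaré–Friedrichs bounds `∫_K fᵢ² ≤ C_PF² h² ∫_K ‖Dfᵢ‖²`, then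
`∫_K ‖Dv‖² ≤ (2 C_PF²/(1 − |⟪t₁,t₂⟫|)) h² ∫_K ‖D²v‖²`. -/
theorem stmt_6 (K : Set (EuclideanSpace ℝ (Fin 2))) (hK : MeasurableSet K)
    (v : EuclideanSpace ℝ (Fin 2) → ℝ) (hv : ContDiff ℝ 2 v)
    (t₁ t₂ : EuclideanSpace ℝ (Fin 2)) (ht₁ : ‖t₁‖ = 1) (ht₂ : ‖t₂‖ = 1)
    (ht : |⟪t₁, t₂⟫| < 1)
    (C_PF h : ℝ) (hCPF : 0 < C_PF) (hh : 0 < h)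
    (hPF₁ : ∫⁻ x in K, ENNReal.ofReal ((fderiv ℝ v x t₁) ^ 2) ≤
      ENNReal.ofReal (C_PF ^ 2 * h ^ 2) *
        ∫⁻ x in K, ENNReal.ofReal (‖fderiv ℝ (fun y => fderiv ℝ v y t₁) x‖ ^ 2))
    (hPF₂ : ∫⁻ x in K, ENNReal.ofReal ((fderiv ℝ v x t₂) ^ 2) ≤
      ENNReal.ofReal (C_PF ^ 2 * h ^ 2) *
        ∫⁻ x in K, ENNReal.ofReal (‖fderiv ℝ (fun y => fderiv ℝ v y t₂) x‖ ^ 2)) :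
    ∫⁻ x in K, ENNReal.ofReal (‖fderiv ℝ v x‖ ^ 2) ≤
      ENNReal.ofReal (2 * C_PF ^ 2 / (1 - |⟪t₁, t₂⟫|) * h ^ 2) *
        ∫⁻ x in K, ENNReal.ofReal (‖iteratedFDeriv ℝ 2 v x‖ ^ 2) :=
  stmt_6_general K v hv t₁ t₂ ht₁ ht₂ ht C_PF h hPF₁ hPF₂
end
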